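/- Querying a maxonomial decreases block sensitivity on a 0-instance: let p nondeterministically represent f, let w be an input with f(w) = 0, and let M be a maxonomial of p. Then bs_w(f restricted by fixing the variables of M according to w) ≤ bs_w(f) − 1; more precisely, the subfunction of f obtained by fixing the M-variables to their values in w has block sensitivity on (the restriction of) w strictly less than bs_w(f). -/

import Mathlib

def flipSet {N : ℕ} (x : Fin N → Bool) (B : Finset (Fin N)) : Fin N → Bool :=
  fun i => if i ∈ B then !(x i) else x i

def SensitiveBlock {N : ℕ} (f : (Fin N → Bool) → Bool) (x : Fin N → Bool)
    (B : Finset (Fin N)) : Prop :=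
  f (flipSet x B) ≠ f x

noncomputable def bsAt {N : ℕ} (f : (Fin N → Bool) → Bool) (x : Fin N → Bool) : ℕ :=
  sSup {k | ∃ Bs : Finset (Finset (Fin N)), Bs.card = k ∧
    (∀ B ∈ Bs, SensitiveBlock f x B) ∧
    (Bs : Set (Finset (Fin N))).Pairwise (fun B B' => Disjoint B B')}

noncomputable def blockSens {N : ℕ} (f : (Fin N → Bool) → Bool) : ℕ :=
  sSup (Set.range (bsAt f))

noncomputable def sensAt {N : ℕ} (f : (Fin N → Bool) → Bool) (x : Fin N → Bool) : ℕ :=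
  {i : Fin N | SensitiveBlock f x {i}}.ncard

noncomputable def sens {N : ℕ} (f : (Fin N → Bool) → Bool) : ℕ :=
  sSup (Set.range (sensAt f))

def MinimalSensitiveBlock {N : ℕ} (f : (Fin N → Bool) → Bool) (x : Fin N → Bool)
    (B : Finset (Fin N)) : Prop :=
  SensitiveBlock f x B ∧ ∀ B' ⊂ B, ¬ SensitiveBlock f x B'

def boolToReal (b : Bool) : ℝ := if b then 1 else 0

def Multilinear {N : ℕ} (p : MvPolynomial (Fin N) ℝ) : Prop :=
  ∀ m ∈ p.support, ∀ i, m i ≤ 1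

/-- `p` nondeterministically represents `f`: it vanishes exactly on the zeros of `f`. -/
def NRepresents {N : ℕ} (p : MvPolynomial (Fin N) ℝ) (f : (Fin N → Bool) → Bool) : Prop :=
  ∀ x : Fin N → Bool, MvPolynomial.eval (fun i => boolToReal (x i)) p = 0 ↔ f x = false

/-- `p` exactly represents `f` on the Boolean cube. -/
def ERepresents {N : ℕ} (p : MvPolynomial (Fin N) ℝ) (f : (Fin N → Bool) → Bool) : Prop :=
  ∀ x : Fin N → Bool, MvPolynomial.eval (fun i => boolToReal (x i)) p = boolToReal (f x)

/-- nondeterministic degree -/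
noncomputable def ndeg {N : ℕ} (f : (Fin N → Bool) → Bool) : ℕ :=
  sInf {d | ∃ p : MvPolynomial (Fin N) ℝ, Multilinear p ∧ NRepresents p f ∧ p.totalDegree = d}

/-!
Fixing the variables of `S` to their values in `w` turns each sensitive block `B` of the
restricted function into the sensitive block `B \ S` of `f`, and these stay disjoint; if `f`
has a sensitive block inside `S`, it can be added to the family, so block sensitivity at `w`
drops by at least one. For a maxonomial `M` of a polynomial `p` nondeterministically
representing `f`, such a block exists: by the combinatorial Nullstellensatz, `p` does not
vanish on the subcube of points agreeing with `w` off `M`, i.e. `f(w^B) = 1` for some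
`B ⊆ M`.
-/

open Finset

variable {N : ℕ}

def fixCoords (f : (Fin N → Bool) → Bool) (S : Finset (Fin N)) (w : Fin N → Bool) :
    (Fin N → Bool) → Bool :=
  fun y => f (fun i => if i ∈ S then w i else y i)

def DisjointSensitiveBlocks (f : (Fin N → Bool) → Bool) (x : Fin N → Bool)
    (Bs : Finset (Finset (Fin N))) : Prop :=
  (∀ B ∈ Bs, SensitiveBlock f x B) ∧ (Bs : Set (Finset (Fin N))).Pairwise Disjoint

@[simp]
lemma flipSet_empty (x : Fin N → Bool) : flipSet x ∅ = x := by
  funext i; simp [flipSet]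

lemma SensitiveBlock.nonempty {f : (Fin N → Bool) → Bool} {x : Fin N → Bool}
    {B : Finset (Fin N)} (hB : SensitiveBlock f x B) : B.Nonempty := by
  rw [Finset.nonempty_iff_ne_empty]
  rintro rfl
  exact hB (by rw [flipSet_empty])

section bsAt

variable (f : (Fin N → Bool) → Bool) (x : Fin N → Bool)

lemma bddAbove_disjointSensitiveBlocks_card :
    BddAbove {k | ∃ Bs : Finset (Finset (Fin N)), Bs.card = k ∧ DisjointSensitiveBlocks f x Bs} :=
  ⟨Fintype.card (Finset (Fin N)), by
    rintro k ⟨Bs, rfl, -⟩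
    exact Finset.card_le_univ Bs⟩

lemma exists_disjointSensitiveBlocks_card_eq_bsAt :
    ∃ Bs : Finset (Finset (Fin N)), Bs.card = bsAt f x ∧ DisjointSensitiveBlocks f x Bs :=
  Nat.sSup_mem (s := {k | ∃ Bs : Finset (Finset (Fin N)), Bs.card = k ∧
      DisjointSensitiveBlocks f x Bs})
    ⟨0, ∅, rfl, by simp [DisjointSensitiveBlocks]⟩ (bddAbove_disjointSensitiveBlocks_card f x)

lemma DisjointSensitiveBlocks.card_le_bsAt {f : (Fin N → Bool) → Bool} {x : Fin N → Bool}
    {Bs : Finset (Finset (Fin N))} (h : DisjointSensitiveBlocks f x Bs) :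
    Bs.card ≤ bsAt f x :=
  le_csSup (bddAbove_disjointSensitiveBlocks_card f x) ⟨Bs, rfl, h⟩

end bsAt

section fixCoords

variable (f : (Fin N → Bool) → Bool) (S : Finset (Fin N)) (w : Fin N → Bool)

lemma fixCoords_flipSet (B : Finset (Fin N)) :
    fixCoords f S w (flipSet w B) = f (flipSet w (B \ S)) := by
  unfold fixCoords
  congr 1
  funext i
  by_cases hi : i ∈ S <;> simp [flipSet, hi]

lemma sensitiveBlock_fixCoords_iff (B : Finset (Fin N)) :
    SensitiveBlock (fixCoords f S w) w B ↔ SensitiveBlock f w (B \ S) := by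
  have hw := fixCoords_flipSet f S w ∅
  simp only [flipSet_empty, Finset.empty_sdiff] at hw
  rw [SensitiveBlock, SensitiveBlock, hw, fixCoords_flipSet]

lemma DisjointSensitiveBlocks.image_sdiff {Bs : Finset (Finset (Fin N))}
    (h : DisjointSensitiveBlocks (fixCoords f S w) w Bs) :
    DisjointSensitiveBlocks f w (Bs.image (· \ S)) ∧ (Bs.image (· \ S)).card = Bs.card := by
  obtain ⟨hsens, hdisj⟩ := h
  have hsens' : ∀ B ∈ Bs, SensitiveBlock f w (B \ S) := fun B hB =>
    (sensitiveBlock_fixCoords_iff f S w B).1 (hsens B hB)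
  have hdisj' : ∀ B ∈ Bs, ∀ B' ∈ Bs, B ≠ B' → Disjoint (B \ S) (B' \ S) :=
    fun B hB B' hB' hne => (hdisj hB hB' hne).mono sdiff_subset sdiff_subset
  refine ⟨⟨?_, ?_⟩, card_image_of_injOn ?_⟩
  · simpa using hsens'
  · simp only [coe_image]
    rintro _ ⟨B, hB, rfl⟩ _ ⟨B', hB', rfl⟩ hne
    exact hdisj' B hB B' hB' fun h => hne (h ▸ rfl)
  · intro B hB B' hB' heq
    by_contra hne
    have hd := hdisj' B hB B' hB' hne
    rw [show B \ S = B' \ S from heq, disjoint_self] at hd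
    exact (hsens' B' hB').nonempty.ne_empty hd

theorem bsAt_fixCoords_lt {B₀ : Finset (Fin N)} (hB₀S : B₀ ⊆ S)
    (hB₀ : SensitiveBlock f w B₀) :
    bsAt (fixCoords f S w) w < bsAt f w := by
  obtain ⟨Bs, hcard, hBs⟩ := exists_disjointSensitiveBlocks_card_eq_bsAt (fixCoords f S w) w
  obtain ⟨⟨hsens, hdisj⟩, hcard'⟩ := hBs.image_sdiff f S w
  have hB₀disj : ∀ B ∈ Bs.image (· \ S), Disjoint B₀ B := by
    simp only [mem_image]
    rintro _ ⟨B, -, rfl⟩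
    exact disjoint_sdiff.mono_left hB₀S
  have hB₀not : B₀ ∉ Bs.image (· \ S) := fun h =>
    hB₀.nonempty.ne_empty (disjoint_self.1 (hB₀disj B₀ h))
  have hnew : DisjointSensitiveBlocks f w (insert B₀ (Bs.image (· \ S))) := by
    refine ⟨(forall_mem_insert _ _ _).2 ⟨hB₀, hsens⟩, ?_⟩
    rw [coe_insert]
    exact hdisj.insert fun B hB _ => ⟨hB₀disj B hB, (hB₀disj B hB).symm⟩
  have := hnew.card_le_bsAt
  rw [card_insert_of_notMem hB₀not, hcard', hcard] at this
  omega

end fixCoords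

lemma exists_subset_boolToReal_flipSet_eq {S : Finset (Fin N)} {w : Fin N → Bool}
    {x : Fin N → ℝ} (hS : ∀ i ∈ S, x i ∈ ({0, 1} : Finset ℝ))
    (hSc : ∀ i ∉ S, x i = boolToReal (w i)) :
    ∃ B ⊆ S, (fun i => boolToReal (flipSet w B i)) = x := by
  refine ⟨S.filter fun i => x i ≠ boolToReal (w i), filter_subset _ _, funext fun i => ?_⟩
  by_cases hiS : i ∈ S
  · have hx01 := hS i hiS
    simp only [mem_insert, mem_singleton] at hx01
    simp only [flipSet, mem_filter, hiS, true_and]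
    cases w i <;> simp only [boolToReal] <;> grind
  · simp [flipSet, hiS, hSc i hiS]

/-- The maxonomial lemma. -/
theorem exists_subset_support_flipSet_eq_true {f : (Fin N → Bool) → Bool}
    {p : MvPolynomial (Fin N) ℝ} (hrep : NRepresents p f) (w : Fin N → Bool)
    {M : Fin N →₀ ℕ} (hM : M ∈ p.support) (hM1 : ∀ i, M i ≤ 1)
    (hmax : M.degree = p.totalDegree) :
    ∃ B ⊆ M.support, f (flipSet w B) = true := by
  let T : Fin N → Finset ℝ := fun i => if i ∈ M.support then {0, 1} else {boolToReal (w i)}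
  have hMT : ∀ i, M i < (T i).card := fun i => by
    by_cases hi : i ∈ M.support
    · simpa only [T, hi, if_true, card_pair zero_ne_one] using Nat.lt_succ_of_le (hM1 i)
    · simp [T, Finsupp.notMem_support_iff.1 hi]
  obtain ⟨x, hxT, hx⟩ := MvPolynomial.combinatorial_nullstellensatz_exists_eval_nonzero p M
    (MvPolynomial.mem_support_iff.1 hM) hmax.symm T hMT
  obtain ⟨B, hBM, rfl⟩ := exists_subset_boolToReal_flipSet_eq (S := M.support) (w := w)
    (fun i hi => by simpa only [T, hi, if_true] using hxT i)
    (fun i hi => by simpa only [T, hi, if_false, mem_singleton] using hxT i)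
  refine ⟨B, hBM, ?_⟩
  by_contra hB
  exact hx ((hrep _).2 (by simpa using hB))

/-- Querying a maxonomial strictly decreases block sensitivity on a `0`-instance:
the subfunction obtained by fixing the variables of a maximal-degree monomial `M`
to their values in `w` has strictly smaller block sensitivity at `w`. -/
theorem stmt9 (N : ℕ) (f : (Fin N → Bool) → Bool) (p : MvPolynomial (Fin N) ℝ)
    (hml : Multilinear p) (hrep : NRepresents p f)
    (w : Fin N → Bool) (hw : f w = false)
    (M : (Fin N) →₀ ℕ) (hM : M ∈ p.support)
    (hmax : (M.sum fun _ e => e) = p.totalDegree) :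
    bsAt (fun y => f (fun i => if i ∈ M.support then w i else y i)) w < bsAt f w := by
  obtain ⟨B, hBM, hB⟩ := exists_subset_support_flipSet_eq_true hrep w hM (hml M hM) hmax
  exact bsAt_fixCoords_lt f M.support w hBM (by simp [SensitiveBlock, hB, hw])
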